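/- arXiv:1203.2383 — 7 statements merged into one kernel-verified Lean document; each statement's English description precedes it below -/
import Mathlib

section
/- Let G = Z_{n_1} × ... × Z_{n_{s-1}} × Z_{n_s} be a finite abelian group with n_1 | n_2 | ... | n_s. If H is a subgroup of G isomorphic to the cyclic group Z_{n_s}, then the quotient G/H is isomorphic to Z_{n_1} × ... × Z_{n_{s-1}}. -/
/-!
The generator `g` of `H` has order `N = n_s`. Embedding each `ZMod n_i` into `ZMod N` (via
`1 ↦ N / n_i`) turns `g` into a vector of order `N` in `(ZMod N)^(s+1)`, whose entries
therefore generate the unit ideal. Since `ZMod N` has stable range one, the resulting linear form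
can be chosen with a unit coefficient on the last coordinate: this gives `f : G →+ ZMod N` with
`f g = 1` which is bijective on the last factor. The first property splits off `⟨g⟩`, so `G ⧸ H ≃ ker f`, and the
second identifies `ker f` with the first `s` factors.
-/

theorem AddSubgroup.closure_range_eq_top_of_addOrderOf_eq_card {A ι : Type*} [AddGroup A]
    [Finite A] (y : ι → A) (hy : addOrderOf y = Nat.card A) :
    AddSubgroup.closure (Set.range y) = ⊤ := by
  set K := AddSubgroup.closure (Set.range y)
  have hKy : Nat.card K • y = 0 := funext fun i =>
    congrArg Subtype.val (card_nsmul_eq_zero' (x := (⟨y i, subset_closure ⟨i, rfl⟩⟩ : K)))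
  refine K.eq_top_of_card_eq (Nat.dvd_antisymm K.card_addSubgroup_dvd_card ?_)
  exact hy ▸ addOrderOf_dvd_of_nsmul_eq_zero hKy

theorem ZMod.natCast_dvd_of_castHom_eq_zero {N d : ℕ} [NeZero N] (hd : d ∣ N) {x : ZMod N}
    (hx : ZMod.castHom hd (ZMod d) x = 0) : (d : ZMod N) ∣ x := by
  rw [← ZMod.natCast_zmod_val x] at hx ⊢
  rw [map_natCast, ZMod.natCast_eq_zero_iff] at hx
  exact Nat.cast_dvd_cast hx

theorem ZMod.exists_isUnit_add_mul_of_isCoprime {N : ℕ} [NeZero N] {a b : ZMod N}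
    (h : IsCoprime a b) : ∃ μ : ZMod N, IsUnit (a + μ * b) := by
  -- `b = v * d` with `d ∣ N`; then `a` is a unit mod `d`, and a unit of `ZMod N` lifting it
  -- differs from `a` by a multiple of `d`, i.e. of `b`.
  obtain ⟨d, hdN, _, ⟨v, rfl⟩, rfl⟩ := ZMod.eq_unit_mul_divisor b
  set π := ZMod.castHom hdN (ZMod d)
  have hπa : IsUnit (π a) := by
    obtain ⟨x, y, hxy⟩ := h
    refine IsUnit.of_mul_eq_one_right (π x) ?_
    have := congrArg π hxy
    rwa [map_add, map_mul, map_mul, map_mul, map_natCast, ZMod.natCast_self, mul_zero, mul_zero,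
      add_zero, map_one] at this
  obtain ⟨w, hw⟩ := ZMod.unitsMap_surjective hdN hπa.unit
  obtain ⟨t, ht⟩ : (d : ZMod N) ∣ w - a := by
    apply ZMod.natCast_dvd_of_castHom_eq_zero hdN
    rw [map_sub, sub_eq_zero]
    exact congrArg Units.val hw
  refine ⟨t * ↑v⁻¹, ?_⟩
  convert w.isUnit using 1
  calc a + t * ↑v⁻¹ * (↑v * d) = a + d * t := by
        rw [mul_assoc, Units.inv_mul_cancel_left, mul_comm]
    _ = w := by rw [← ht]; ring

theorem ZMod.exists_isUnit_and_sum_mul_eq_one {N : ℕ} [NeZero N] {ι : Type*} [Fintype ι]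
    [DecidableEq ι] (y : ι → ZMod N) (hy : addOrderOf y = N) (i₀ : ι) :
    ∃ w : ι → ZMod N, IsUnit (w i₀) ∧ ∑ i, w i * y i = 1 := by
  have h1 : (1 : ZMod N) ∈ AddSubgroup.closure (Set.range y) := by
    rw [AddSubgroup.closure_range_eq_top_of_addOrderOf_eq_card y (by rwa [Nat.card_zmod])]
    trivial
  obtain ⟨c, hc⟩ := AddSubgroup.exists_of_mem_closure_range y 1 h1
  set t := ∑ i ∈ Finset.univ.erase i₀, (c i : ZMod N) * y i
  have hsplit : (c i₀ : ZMod N) * y i₀ + t = 1 := by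
    simp only [t, Finset.add_sum_erase _ (fun i => (c i : ZMod N) * y i) (Finset.mem_univ i₀),
      hc, zsmul_eq_mul]
  obtain ⟨μ, u, hu⟩ := ZMod.exists_isUnit_add_mul_of_isCoprime (a := y i₀) (b := t)
    ⟨c i₀, 1, by rw [one_mul, hsplit]⟩
  refine ⟨fun i => ↑u⁻¹ * if i = i₀ then 1 else μ * c i, by simp, ?_⟩
  calc ∑ i, (↑u⁻¹ * if i = i₀ then 1 else μ * c i) * y i = ↑u⁻¹ * (y i₀ + μ * t) := by
        rw [Finset.mul_sum, mul_add, Finset.mul_sum,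
          ← Finset.add_sum_erase _ _ (Finset.mem_univ i₀), if_pos rfl, mul_one]
        congr 1
        refine Finset.sum_congr rfl fun i hi => ?_
        rw [if_neg (Finset.ne_of_mem_erase hi)]
        ring
    _ = 1 := by rw [← hu, Units.inv_mul]

def ZMod.inclOfDvd {n N : ℕ} (h : n ∣ N) : ZMod n →+ ZMod N :=
  ZMod.lift n ⟨zmultiplesHom _ ((N / n : ℕ) : ZMod N), by
    simp [← Nat.cast_mul, Nat.mul_div_cancel' h]⟩

theorem ZMod.inclOfDvd_natCast {n N : ℕ} (h : n ∣ N) (k : ℕ) :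
    ZMod.inclOfDvd h k = ((k * (N / n) : ℕ) : ZMod N) := by
  rw [← Int.cast_natCast, ZMod.inclOfDvd, ZMod.lift_coe]
  simp

theorem ZMod.inclOfDvd_injective {n N : ℕ} [NeZero N] (h : n ∣ N) :
    Function.Injective (ZMod.inclOfDvd h) := by
  have : NeZero n := ⟨fun hn => NeZero.ne N (Nat.eq_zero_of_zero_dvd (hn ▸ h))⟩
  refine (injective_iff_map_eq_zero _).2 fun x hx => ?_
  rw [← ZMod.natCast_zmod_val x, ZMod.inclOfDvd_natCast, ZMod.natCast_eq_zero_iff] at hx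
  rw [← ZMod.natCast_zmod_val x, ZMod.natCast_eq_zero_iff]
  have hq : 0 < N / n := Nat.div_pos (Nat.le_of_dvd (NeZero.pos N) h) (NeZero.pos n)
  exact Nat.dvd_of_mul_dvd_mul_right hq (by rwa [Nat.mul_div_cancel' h])

theorem AddSubgroup.eq_zmultiples_symm_one {G : Type*} [AddGroup G] {H : AddSubgroup G} {N : ℕ}
    (e : H ≃+ ZMod N) : H = AddSubgroup.zmultiples (e.symm 1 : G) := by
  refine le_antisymm (fun x hx => ?_) (zmultiples_le_of_mem (e.symm 1).2)
  obtain ⟨k, hk⟩ := ZMod.intCast_surjective (e ⟨x, hx⟩)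
  have hek : e.symm (k • 1) = ⟨x, hx⟩ := by rw [zsmul_one, hk, e.symm_apply_apply]
  rw [map_zsmul] at hek
  exact ⟨k, congrArg Subtype.val hek⟩

noncomputable def AddMonoidHom.quotientZMultiplesEquivKer {G : Type*} [AddCommGroup G] {N : ℕ}
    {g : G} (hg : N • g = 0) (f : G →+ ZMod N) (hfg : f g = 1) :
    G ⧸ AddSubgroup.zmultiples g ≃+ f.ker :=
  let ψ : ZMod N →+ G := ZMod.lift N ⟨zmultiplesHom G g, by simpa using hg⟩
  have hψ (k : ℤ) : ψ k = k • g := ZMod.lift_coe N _ k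
  have hfψ (t : ZMod N) : f (ψ t) = t := by
    obtain ⟨k, rfl⟩ := ZMod.intCast_surjective t
    rw [hψ, map_zsmul, hfg, zsmul_one]
  let p : G →+ f.ker := (AddMonoidHom.id G - ψ.comp f).codRestrict f.ker fun x => by
    simp [hfψ]
  have hp : Function.Surjective p := fun x => ⟨x, by ext; simp [p, f.mem_ker.1 x.2]⟩
  have hker : p.ker = AddSubgroup.zmultiples g := by
    ext x
    rw [AddMonoidHom.mem_ker, ← Subtype.coe_inj]
    change x - ψ (f x) = 0 ↔ _
    constructor
    · intro hx
      obtain ⟨k, hk⟩ := ZMod.intCast_surjective (f x)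
      exact ⟨k, by rw [sub_eq_zero.1 hx, ← hk, hψ]⟩
    · rintro ⟨k, rfl⟩
      rw [map_zsmul, hfg, zsmul_one, hψ, sub_self]
  (QuotientAddGroup.quotientAddEquivOfEq hker.symm).trans
    (QuotientAddGroup.quotientKerEquivOfSurjective p hp)

noncomputable def AddMonoidHom.kerEquivInitOfBijective {s : ℕ} {A : Fin (s + 1) → Type*}
    [∀ i, AddCommGroup (A i)] {M : Type*} [AddCommGroup M] (f : (∀ i, A i) →+ M)
    (hf : Function.Bijective (f.comp (AddMonoidHom.single A (Fin.last s)))) :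
    f.ker ≃+ ∀ j : Fin s, A j.castSucc :=
  AddEquiv.ofBijective
    ((AddMonoidHom.pi fun j => Pi.evalAddMonoidHom A j.castSucc).comp f.ker.subtype) <| by
    constructor
    · refine (injective_iff_map_eq_zero _).2 fun ⟨x, hx⟩ hx0 => ?_
      have hx_single : x = Pi.single (Fin.last s) (x (Fin.last s)) := by
        funext i
        induction i using Fin.lastCases with
        | last => rw [Pi.single_eq_same]
        | cast j => rw [Pi.single_eq_of_ne (Fin.castSucc_ne_last j)]; exact congrFun hx0 j
      have hlast : x (Fin.last s) = 0 := hf.1 <| by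
        simpa [← hx_single] using f.mem_ker.1 hx
      ext1
      change x = 0
      rw [hx_single, hlast, Pi.single_zero]
    · intro y
      obtain ⟨a, ha⟩ := hf.2 (-f (Fin.snoc y 0))
      refine ⟨⟨Fin.snoc y 0 + Pi.single (Fin.last s) a, ?_⟩, ?_⟩
      · simpa [f.mem_ker, add_eq_zero_iff_eq_neg'] using ha
      · funext j
        simp

theorem exists_addMonoidHom_zmod_apply_eq_one {s : ℕ} {n : Fin (s + 1) → ℕ}
    [∀ i, NeZero (n i)] (hn : ∀ i, n i ∣ n (Fin.last s)) (g : ∀ i, ZMod (n i))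
    (hg : addOrderOf g = n (Fin.last s)) :
    ∃ f : (∀ i, ZMod (n i)) →+ ZMod (n (Fin.last s)),
      f g = 1 ∧ Function.Bijective (f.comp (AddMonoidHom.single _ (Fin.last s))) := by
  let κ : (∀ i, ZMod (n i)) →+ (Fin (s + 1) → ZMod (n (Fin.last s))) :=
    AddMonoidHom.pi fun i => (ZMod.inclOfDvd (hn i)).comp (Pi.evalAddMonoidHom _ i)
  have hκ : Function.Injective κ := (injective_iff_map_eq_zero κ).2 fun x hx =>
    funext fun i => ZMod.inclOfDvd_injective (hn i) <| by
      rw [Pi.zero_apply, map_zero]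
      exact congrFun hx i
  obtain ⟨w, hw, hwg⟩ := ZMod.exists_isUnit_and_sum_mul_eq_one (κ g)
    (by rw [addOrderOf_injective κ hκ, hg]) (Fin.last s)
  let f : (∀ i, ZMod (n i)) →+ ZMod (n (Fin.last s)) :=
    AddMonoidHom.mk' (fun x => ∑ i, w i * κ x i) fun x y => by
      simp only [map_add, Pi.add_apply, mul_add, Finset.sum_add_distrib]
  refine ⟨f, hwg, Finite.injective_iff_bijective.1 ?_⟩
  have hf_single : ⇑(f.comp (AddMonoidHom.single _ (Fin.last s))) =
      fun a => w (Fin.last s) * ZMod.inclOfDvd (hn _) a := by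
    funext a
    refine (Finset.sum_eq_single (Fin.last s) (fun i _ hi => ?_)
      (fun h => absurd (Finset.mem_univ _) h)).trans ?_
    · simp [κ, Pi.single_eq_of_ne hi]
    · simp [κ]
  rw [hf_single]
  exact hw.mul_right_injective.comp (ZMod.inclOfDvd_injective _)

/-- If `G = Z_{n_1} × ... × Z_{n_s}` with `n_1 | n_2 | ... | n_s` and `H` is a
subgroup of `G` isomorphic to the cyclic group `Z_{n_s}`, then
`G/H ≅ Z_{n_1} × ... × Z_{n_{s-1}}`. -/
theorem stmt0 (s : ℕ) (n : Fin (s + 1) → ℕ) (hpos : ∀ i, 0 < n i)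
    (hdvd : ∀ i : Fin s, n i.castSucc ∣ n i.succ)
    (H : AddSubgroup (∀ i : Fin (s + 1), ZMod (n i)))
    (hH : Nonempty (H ≃+ ZMod (n (Fin.last s)))) :
    Nonempty (((∀ i : Fin (s + 1), ZMod (n i)) ⧸ H) ≃+
      ∀ i : Fin s, ZMod (n i.castSucc)) := by
  have : ∀ i, NeZero (n i) := fun i => ⟨(hpos i).ne'⟩
  have hn : ∀ i, n i ∣ n (Fin.last s) := fun i => by
    rcases (Fin.le_last i).lt_or_eq with hi | rfl
    · exact (Fin.liftFun_iff_succ (· ∣ ·)).2 hdvd hi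
    · exact dvd_rfl
  obtain ⟨e⟩ := hH
  have hg : addOrderOf (e.symm 1 : ∀ i, ZMod (n i)) = n (Fin.last s) := by
    rw [AddSubgroup.addOrderOf_coe, AddEquiv.addOrderOf_eq, ZMod.addOrderOf_one]
  obtain ⟨f, hfg, hf⟩ := exists_addMonoidHom_zmod_apply_eq_one hn _ hg
  rw [AddSubgroup.eq_zmultiples_symm_one e]
  have hNg := addOrderOf_dvd_iff_nsmul_eq_zero.1 (dvd_of_eq hg)
  exact ⟨(AddMonoidHom.quotientZMultiplesEquivKer hNg f hfg).trans (f.kerEquivInitOfBijective hf)⟩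
end

section
/- Let A be a k × m matrix over a commutative ring R that satisfies the columns condition over R, witnessed by column indices 0 = k_0 < k_1 < ... < k_t = m (after reordering columns) with partial column sums S^1 = 0 and each S^i (i > 1) an R-linear combination of the first k_{i-1} columns. Let G be an R-module and let x_1, ..., x_t be elements of G. Then there exist elements y_1, ..., y_m of G, each of the form y_j = x_i + (an R-linear combination of x_{i+1}, ..., x_t) for some i, such that A·(y_1, ..., y_m)^T = 0 in G^k. -/
open Finset

/-- if a `k × m` matrix `A` over a commutative ring `R` satisfies the columns
condition (with the columns already ordered, witnessed by indices
`0 = ks 0 < ks 1 < ... < ks t = m`, the first block of columns summing to `0` and each later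
block-sum being an `R`-linear combination of the earlier columns), then for any `R`-module `G`
and any elements `x_1, ..., x_t` of `G` there are `y_1, ..., y_m ∈ G`, each of the form
`x_i + (R-linear combination of x_{i+1}, ..., x_t)`, with `A · y = 0` in `G^k`. -/
theorem stmt2 (R : Type) [CommRing R] (k m t : ℕ) (ht : 0 < t)
    (A : Matrix (Fin k) (Fin m) R)
    (ks : Fin (t + 1) → ℕ) (hks0 : ks 0 = 0) (hkst : ks (Fin.last t) = m)
    (hmono : StrictMono ks)
    -- (i) the first block of columns sums to zero
    (h1 : ∀ r : Fin k,
      ∑ j ∈ univ.filter (fun j : Fin m => (j : ℕ) < ks 1), A r j = 0)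
    -- (ii) each later block-sum is an R-linear combination of the preceding columns
    (h2 : ∀ i : Fin t, (i : ℕ) ≠ 0 → ∃ c : Fin m → R, ∀ r : Fin k,
      ∑ j ∈ univ.filter
        (fun j : Fin m => ks i.castSucc ≤ (j : ℕ) ∧ (j : ℕ) < ks i.succ), A r j =
      ∑ j ∈ univ.filter (fun j : Fin m => (j : ℕ) < ks i.castSucc), c j * A r j)
    (G : Type) [AddCommGroup G] [Module R G] (x : Fin t → G) :
    ∃ y : Fin m → G,
      (∀ j : Fin m, ∃ i : Fin t, ∃ a : Fin t → R,
        y j = x i + ∑ j' ∈ univ.filter (fun j' : Fin t => i < j'), a j' • x j') ∧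
      (∀ r : Fin k, ∑ j : Fin m, A r j • y j = 0) := by
  classical
  haveI : NeZero t := ⟨ht.ne'⟩
  -- each column index j lies in a unique block
  have hbex : ∀ j : Fin m, ∃ i : Fin t, ks i.castSucc ≤ (j : ℕ) ∧ (j : ℕ) < ks i.succ := by
    intro j
    have hz : (0 : Fin t) ∈ univ.filter (fun i : Fin t => ks i.castSucc ≤ (j : ℕ)) := by
      simp [Fin.castSucc_zero, hks0]
    set s := univ.filter (fun i : Fin t => ks i.castSucc ≤ (j : ℕ)) with hs
    have hne : s.Nonempty := ⟨0, hz⟩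
    refine ⟨s.max' hne, (mem_filter.mp (s.max'_mem hne)).2, ?_⟩
    set i := s.max' hne with hi
    by_contra hlt
    push_neg at hlt
    have hjm : (j : ℕ) < ks (Fin.last t) := hkst ▸ j.isLt
    have hsl : i.succ < Fin.last t := hmono.lt_iff_lt.mp (lt_of_le_of_lt hlt hjm)
    have h1' : (i : ℕ) + 1 < t := by
      simpa [Fin.lt_iff_val_lt_val] using hsl
    let i' : Fin t := ⟨(i : ℕ) + 1, h1'⟩
    have hcs : i'.castSucc = i.succ := by ext; simp [i']
    have hmem : i' ∈ s := by
      simp only [hs, mem_filter, mem_univ, true_and, hcs]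
      exact hlt
    have := s.le_max' i' hmem
    have : (i' : ℕ) ≤ (i : ℕ) := this
    simp [i'] at this
  choose b hb1 hb2 using hbex
  -- key order facts
  have key1 : ∀ (j : Fin m) (i : Fin t), (j : ℕ) < ks i.castSucc ↔ b j < i := by
    intro j i
    constructor
    · intro h
      by_contra hle
      push_neg at hle
      have : ks i.castSucc ≤ ks (b j).castSucc :=
        hmono.le_iff_le.mpr (by simp only [Fin.le_iff_val_le_val, Fin.coe_castSucc]; exact hle)
      have := hb1 j
      omega
    · intro h
      have hle : (b j).succ ≤ i.castSucc := by
        simp only [Fin.le_iff_val_le_val, Fin.val_succ, Fin.coe_castSucc]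
        exact h
      exact lt_of_lt_of_le (hb2 j) (hmono.le_iff_le.mpr hle)
  have key2 : ∀ (j : Fin m) (i : Fin t), (j : ℕ) < ks i.succ ↔ b j ≤ i := by
    intro j i
    constructor
    · intro h
      by_contra hle
      push_neg at hle
      have hle' : i.succ ≤ (b j).castSucc := by
        simp only [Fin.le_iff_val_le_val, Fin.val_succ, Fin.coe_castSucc]
        exact hle
      have := hmono.le_iff_le.mpr hle'
      have := hb1 j
      omega
    · intro h
      have hle : (b j).succ ≤ i.succ := by
        simp only [Fin.le_iff_val_le_val, Fin.val_succ]
        exact Nat.succ_le_succ h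
      exact lt_of_lt_of_le (hb2 j) (hmono.le_iff_le.mpr hle)
  have keyeq : ∀ (j : Fin m) (i : Fin t),
      b j = i ↔ (ks i.castSucc ≤ (j : ℕ) ∧ (j : ℕ) < ks i.succ) := by
    intro j i
    constructor
    · rintro rfl
      exact ⟨hb1 j, hb2 j⟩
    · rintro ⟨hL, hU⟩
      have h1' : ¬ b j < i := by
        intro h
        exact absurd ((key1 j i).mpr h) (not_lt.mpr hL)
      exact le_antisymm ((key2 j i).mp hU) (not_lt.mp h1')
  choose! c hc using h2
  refine ⟨fun j => x (b j) - ∑ i ∈ univ.filter (fun i : Fin t => b j < i), c i j • x i, ?_, ?_⟩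
  · intro j
    refine ⟨b j, fun i => -(c i j), ?_⟩
    show x (b j) - ∑ i ∈ univ.filter (fun i : Fin t => b j < i), c i j • x i = _
    rw [sub_eq_add_neg, ← Finset.sum_neg_distrib]
    simp [neg_smul]
  · intro r
    have expand : ∑ j : Fin m,
        A r j • (x (b j) - ∑ i ∈ univ.filter (fun i : Fin t => b j < i), c i j • x i)
        = (∑ j : Fin m, A r j • x (b j)) -
          ∑ j : Fin m, ∑ i ∈ univ.filter (fun i : Fin t => b j < i), (A r j * c i j) • x i := by
      rw [← Finset.sum_sub_distrib]
      refine Finset.sum_congr rfl fun j _ => ?_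
      rw [smul_sub, Finset.smul_sum]
      congr 1
      refine Finset.sum_congr rfl fun i _ => ?_
      rw [smul_smul]
    rw [expand]
    have t1 : ∑ j : Fin m, A r j • x (b j)
        = ∑ i : Fin t, (∑ j ∈ univ.filter
            (fun j : Fin m => ks i.castSucc ≤ (j : ℕ) ∧ (j : ℕ) < ks i.succ), A r j) • x i := by
      rw [← Finset.sum_fiberwise univ b (fun j => A r j • x (b j))]
      refine Finset.sum_congr rfl fun i _ => ?_
      rw [Finset.sum_smul]
      refine Finset.sum_congr (by ext j; simp [keyeq]) fun j hj => ?_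
      exact congrArg (fun z => A r j • x z) ((keyeq j i).mpr (by simpa using hj))
    have t2 : ∑ j : Fin m, ∑ i ∈ univ.filter (fun i : Fin t => b j < i), (A r j * c i j) • x i
        = ∑ i : Fin t, (∑ j ∈ univ.filter (fun j : Fin m => (j : ℕ) < ks i.castSucc),
            A r j * c i j) • x i := by
      simp only [Finset.sum_filter]
      rw [Finset.sum_comm]
      refine Finset.sum_congr rfl fun i _ => ?_
      rw [Finset.sum_smul]
      refine Finset.sum_congr rfl fun j _ => ?_
      have hcond : ((j : ℕ) < ks i.castSucc) = (b j < i) := propext (key1 j i)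
      simp only [hcond, ite_smul, zero_smul]
    rw [t1, t2, ← Finset.sum_sub_distrib]
    refine Finset.sum_eq_zero fun i _ => ?_
    rw [← sub_smul]
    by_cases hi : (i : ℕ) = 0
    · have hi0 : i = 0 := Fin.ext hi
      subst hi0
      have e1 : ∑ j ∈ univ.filter
          (fun j : Fin m => ks (0 : Fin t).castSucc ≤ (j : ℕ) ∧ (j : ℕ) < ks (0 : Fin t).succ),
          A r j = 0 := by
        have hsucc : (0 : Fin t).succ = (1 : Fin (t + 1)) := by
          ext
          simp [Fin.val_one, Nat.mod_eq_of_lt (by omega : 1 < t + 1)]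
        have : (univ.filter
            (fun j : Fin m => ks (0 : Fin t).castSucc ≤ (j : ℕ) ∧ (j : ℕ) < ks (0 : Fin t).succ))
            = univ.filter (fun j : Fin m => (j : ℕ) < ks 1) := by
          ext j
          simp [Fin.castSucc_zero, hks0, hsucc]
        rw [this, h1 r]
      have e2 : ∑ j ∈ univ.filter (fun j : Fin m => (j : ℕ) < ks (0 : Fin t).castSucc),
          A r j * c 0 j = 0 := by
        have : (univ.filter (fun j : Fin m => (j : ℕ) < ks (0 : Fin t).castSucc)) = ∅ := by
          ext j
          simp [Fin.castSucc_zero, hks0]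
        rw [this, Finset.sum_empty]
      rw [e1, e2, sub_zero, zero_smul]
    · have := hc i hi r
      rw [this]
      have : ∑ j ∈ univ.filter (fun j : Fin m => (j : ℕ) < ks i.castSucc), c i j * A r j
          = ∑ j ∈ univ.filter (fun j : Fin m => (j : ℕ) < ks i.castSucc), A r j * c i j := by
        refine Finset.sum_congr rfl fun j _ => mul_comm _ _
      rw [this, sub_self, zero_smul]
end

section
/- Let p be a prime and let G be a finite abelian p-group of type (α_1, ..., α_l) (i.e., G ≅ Z_{p^{α_1}} × ... × Z_{p^{α_l}} with α_1 ≤ ... ≤ α_l), and let M ≥ 1 be such that G contains a subgroup isomorphic to Z_{p^{α_l}}^M. Then the number of subgroups of G isomorphic to Z_{p^{α_l}}^M is at least p^{-M^2 α_l} · |G|^M. -/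
/-!
Let `a` be the top exponent and `T` the set of coordinates of order `p^a`. Multiplication by
`p^(a-1)` has an image of order `p^M` on `(ℤ/p^a)^M` and of order `p^|T|` on `G`, so a copy of
`(ℤ/p^a)^M` inside `G` forces `M ≤ |T|`. Splitting off `M` of those coordinates gives
`G ≃ (ℤ/p^a)^M × K` with `p^a K = 0`, and the graphs of the `|K|^M` homomorphisms
`(ℤ/p^a)^M → K` are distinct subgroups isomorphic to `(ℤ/p^a)^M`. As `|G| = p^(Ma) |K|`, this
is the bound.
-/

open Finset

section Graph

variable {A K : Type*}

def AddMonoidHom.graphEquiv [AddGroup A] [AddGroup K] (f : A →+ K) : A ≃+ f.graph where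
  toFun a := ⟨(a, f a), rfl⟩
  invFun x := x.1.1
  left_inv _ := rfl
  right_inv x := Subtype.ext (Prod.ext rfl x.2)
  map_add' a b := Subtype.ext (Prod.ext rfl (map_add f a b))

lemma AddMonoidHom.graph_injective [AddGroup A] [AddGroup K] :
    Function.Injective (AddMonoidHom.graph : (A →+ K) → AddSubgroup (A × K)) := by
  intro f g h
  ext a
  have hmem : (a, f a) ∈ g.graph := h ▸ AddMonoidHom.mem_graph.2 rfl
  exact (AddMonoidHom.mem_graph.1 hmem).symm

lemma card_addMonoidHom_le_card_addSubgroup_addEquiv [AddGroup A] [AddGroup K]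
    [Finite A] [Finite K] :
    Nat.card (A →+ K) ≤ Nat.card {H : AddSubgroup (A × K) // Nonempty (H ≃+ A)} :=
  Nat.card_le_card_of_injective (fun f => ⟨f.graph, ⟨f.graphEquiv.symm⟩⟩)
    fun _ _ h => AddMonoidHom.graph_injective (congrArg Subtype.val h)

lemma card_addMonoidHom_pi_zmod (ι : Type*) [Finite ι] (n : ℕ) [AddCommGroup K]
    (hK : ∀ x : K, n • x = 0) :
    Nat.card ((ι → ZMod n) →+ K) = Nat.card K ^ Nat.card ι := by
  have : Module (ZMod n) K := AddCommGroup.zmodModule hK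
  rw [← Nat.card_fun, Nat.card_congr (AddMonoidHom.toZModLinearMapEquiv n).toEquiv]
  exact Nat.card_congr (Module.piEquiv ι (ZMod n) K).symm.toEquiv

end Graph

lemma AddEquiv.card_addSubgroup_addEquiv_le {G G' B : Type*} [AddGroup G] [AddGroup G']
    [AddGroup B] [Finite G'] (e : G ≃+ G') :
    Nat.card {H : AddSubgroup G // Nonempty (H ≃+ B)} ≤
      Nat.card {H : AddSubgroup G' // Nonempty (H ≃+ B)} :=
  Nat.card_le_card_of_injective
    (fun H => ⟨H.1.map e.toAddMonoidHom,
      ⟨(H.1.equivMapOfInjective _ e.injective).symm.trans H.2.some⟩⟩)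
    fun _ _ h => Subtype.ext (AddSubgroup.map_injective e.injective (congrArg Subtype.val h))

theorem card_pow_le_mul_card_addSubgroup_addEquiv_pi_zmod {G K : Type*} [AddCommGroup G]
    [AddCommGroup K] [Finite G] {n M : ℕ} (e : G ≃+ (Fin M → ZMod n) × K)
    (hK : ∀ x : K, n • x = 0) :
    Nat.card G ^ M ≤
      n ^ (M ^ 2) * Nat.card {H : AddSubgroup G // Nonempty (H ≃+ (Fin M → ZMod n))} := by
  have : Finite ((Fin M → ZMod n) × K) := Finite.of_equiv G e.toEquiv
  have : Finite (Fin M → ZMod n) := Finite.prod_left K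
  have : Finite K := Finite.prod_right (Fin M → ZMod n)
  have hG : Nat.card G = n ^ M * Nat.card K := by
    rw [Nat.card_congr e.toEquiv, Nat.card_prod, Nat.card_fun, Nat.card_zmod, Nat.card_fin]
  calc Nat.card G ^ M = n ^ (M ^ 2) * Nat.card ((Fin M → ZMod n) →+ K) := by
        rw [hG, card_addMonoidHom_pi_zmod _ _ hK, Nat.card_fin, mul_pow, ← pow_mul, sq]
    _ ≤ n ^ (M ^ 2) * Nat.card {H : AddSubgroup G // Nonempty (H ≃+ (Fin M → ZMod n))} :=
        Nat.mul_le_mul_left _ (card_addMonoidHom_le_card_addSubgroup_addEquiv.trans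
          e.symm.card_addSubgroup_addEquiv_le)

lemma AddEquiv.card_range_nsmul {G G' : Type*} [AddMonoid G] [AddMonoid G'] (e : G ≃+ G')
    (n : ℕ) :
    Nat.card (Set.range fun x : G => n • x) = Nat.card (Set.range fun y : G' => n • y) := by
  have hcomm : (fun y : G' => n • y) ∘ e = e ∘ fun x : G => n • x :=
    funext fun x => (map_nsmul e n x).symm
  rw [← e.surjective.range_comp, hcomm, Set.range_comp,
    Nat.card_image_of_injective e.injective]

lemma AddSubgroup.card_range_nsmul_le {G : Type*} [AddGroup G] [Finite G] (H : AddSubgroup G)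
    (n : ℕ) :
    Nat.card (Set.range fun x : H => n • x) ≤ Nat.card (Set.range fun x : G => n • x) := by
  rw [← Nat.card_image_of_injective Subtype.val_injective, ← Set.range_comp]
  exact Nat.card_mono (Set.toFinite _) (Set.range_subset_iff.2 fun x => ⟨x, rfl⟩)

lemma ZMod.card_range_nsmul (m n : ℕ) [NeZero m] :
    Nat.card (Set.range fun y : ZMod m => n • y) = m / m.gcd n := by
  have hrange : (Set.range fun y : ZMod m => n • y) = AddSubgroup.zmultiples (n : ZMod m) := by
    ext z
    simp only [Set.mem_range, SetLike.mem_coe, AddSubgroup.mem_zmultiples_iff]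
    constructor
    · rintro ⟨y, rfl⟩
      exact ⟨y.val, by simp [nsmul_eq_mul, zsmul_eq_mul, mul_comm]⟩
    · rintro ⟨k, rfl⟩
      exact ⟨k, by simp [nsmul_eq_mul, zsmul_eq_mul, mul_comm]⟩
  rw [hrange, SetLike.coe_sort_coe, Nat.card_zmultiples, ZMod.addOrderOf_coe _ (NeZero.ne m)]

lemma card_range_nsmul_pi_zmod {ι : Type*} [Fintype ι] (m : ι → ℕ) [∀ i, NeZero (m i)]
    (n : ℕ) :
    Nat.card (Set.range fun x : (∀ i, ZMod (m i)) => n • x) = ∏ i, m i / (m i).gcd n := by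
  rw [show (fun x : ∀ i, ZMod (m i) => n • x) = Pi.map fun i y => n • y from rfl,
    Set.range_piMap, Nat.card_congr (Equiv.Set.univPi _), Nat.card_pi]
  exact Finset.prod_congr rfl fun i _ => ZMod.card_range_nsmul (m i) n

lemma card_range_pow_nsmul_pi_zmod {p : ℕ} (hp : p.Prime) {ι : Type*} [Fintype ι]
    {α : ι → ℕ} {a : ℕ} (ha : 1 ≤ a) (hα : ∀ i, α i ≤ a) :
    Nat.card (Set.range fun x : (∀ i, ZMod (p ^ α i)) => p ^ (a - 1) • x) =
      p ^ #{i | α i = a} := by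
  have := Fact.mk hp
  have hfactor :
      ∀ i, p ^ α i / (p ^ α i).gcd (p ^ (a - 1)) = p ^ if α i = a then 1 else 0 := by
    intro i
    split_ifs with h
    · rw [h, Nat.gcd_eq_right (pow_dvd_pow p (Nat.sub_le a 1)),
        Nat.pow_div (Nat.sub_le a 1) hp.pos, Nat.sub_sub_self ha]
    · rw [Nat.gcd_eq_left (pow_dvd_pow p (by have := hα i; omega)),
        Nat.div_self (pow_pos hp.pos _), pow_zero]
  rw [card_range_nsmul_pi_zmod, Finset.prod_congr rfl fun i _ => hfactor i,
    Finset.prod_pow_eq_pow_sum, Finset.sum_boole, Nat.cast_id]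

lemma le_card_filter_eq_of_addEquiv {p : ℕ} (hp : p.Prime) {ι : Type*} [Fintype ι]
    {α : ι → ℕ} {a M : ℕ} (ha : 1 ≤ a) (hα : ∀ i, α i ≤ a)
    (H : AddSubgroup (∀ i, ZMod (p ^ α i))) (e : H ≃+ (Fin M → ZMod (p ^ a))) :
    M ≤ #{i | α i = a} := by
  have := Fact.mk hp
  rw [← Nat.pow_le_pow_iff_right hp.one_lt]
  calc p ^ M = Nat.card (Set.range fun x : Fin M → ZMod (p ^ a) => p ^ (a - 1) • x) := by
        rw [card_range_pow_nsmul_pi_zmod hp ha fun _ => le_rfl]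
        simp
    _ = Nat.card (Set.range fun x : H => p ^ (a - 1) • x) := (e.card_range_nsmul _).symm
    _ ≤ Nat.card (Set.range fun x : (∀ i, ZMod (p ^ α i)) => p ^ (a - 1) • x) :=
        H.card_range_nsmul_le _
    _ = p ^ #{i | α i = a} := card_range_pow_nsmul_pi_zmod hp ha hα

noncomputable def piZModEquivProd {ι : Type*} [DecidableEq ι] (m : ι → ℕ) (n : ℕ)
    (S : Finset ι) (hS : ∀ i ∈ S, m i = n) :
    (∀ i, ZMod (m i)) ≃+* (Fin #S → ZMod n) × ∀ i : {i // i ∉ S}, ZMod (m i) :=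
  (RingEquiv.piEquivPiSubtypeProd (· ∈ S) _).trans <|
    RingEquiv.prodCongr
      ((RingEquiv.piCongrRight fun i : {i // i ∈ S} => ZMod.ringEquivCongr (hS i i.2)).trans
        (RingEquiv.piCongrLeft (fun _ => ZMod n) S.equivFin))
      (RingEquiv.refl _)

lemma pi_zmod_nsmul_eq_zero {ι : Type*} {m : ι → ℕ} {n : ℕ} (h : ∀ i, m i ∣ n)
    (x : ∀ i, ZMod (m i)) : n • x = 0 := by
  funext i
  simp [nsmul_eq_mul, (ZMod.natCast_eq_zero_iff n (m i)).2 (h i)]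

theorem stmt7_general (p : ℕ) (hp : p.Prime) (l M : ℕ)
    (α : Fin (l + 1) → ℕ) (hmono : Monotone α)
    (hex : ∃ H : AddSubgroup (∀ i : Fin (l + 1), ZMod (p ^ α i)),
      Nonempty (H ≃+ (Fin M → ZMod (p ^ α (Fin.last l))))) :
    Nat.card (∀ i : Fin (l + 1), ZMod (p ^ α i)) ^ M ≤
      p ^ (M ^ 2 * α (Fin.last l)) *
        Nat.card {H : AddSubgroup (∀ i : Fin (l + 1), ZMod (p ^ α i)) //
          Nonempty (H ≃+ (Fin M → ZMod (p ^ α (Fin.last l))))} := by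
  have := Fact.mk hp
  have hle : ∀ i, α i ≤ α (Fin.last l) := fun i => hmono (Fin.le_last i)
  obtain ⟨H, ⟨e⟩⟩ := hex
  rcases Nat.eq_zero_or_pos (α (Fin.last l)) with ha | ha
  · -- `G` is trivial, and then `M` is unconstrained.
    have htriv : ∀ i, α i = 0 := fun i => Nat.le_zero.1 (ha ▸ hle i)
    have hpos : 0 < Nat.card {H : AddSubgroup (∀ i : Fin (l + 1), ZMod (p ^ α i)) //
        Nonempty (H ≃+ (Fin M → ZMod (p ^ α (Fin.last l))))} :=
      Nat.card_pos_iff.2 ⟨⟨⟨H, ⟨e⟩⟩⟩, inferInstance⟩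
    rw [show Nat.card (∀ i : Fin (l + 1), ZMod (p ^ α i)) = 1 by simp [htriv],
      one_pow]
    exact Nat.mul_pos (pow_pos hp.pos _) hpos
  · obtain ⟨S, hST, rfl⟩ := exists_subset_card_eq (le_card_filter_eq_of_addEquiv hp ha hle H e)
    rw [pow_mul']
    exact card_pow_le_mul_card_addSubgroup_addEquiv_pi_zmod
      (piZModEquivProd (fun i => p ^ α i) _ S fun i hi => by
        rw [(mem_filter.1 (hST hi)).2]).toAddEquiv
      (pi_zmod_nsmul_eq_zero fun i => pow_dvd_pow p (hle i))

/-- let `G` be a finite abelian `p`-group of type `(α_1, ..., α_{l+1})` with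
`α_1 ≤ ... ≤ α_{l+1}`, and suppose `G` contains a subgroup isomorphic to
`Z_{p^{α_{l+1}}}^M`, `M ≥ 1`. Then the number of subgroups of `G` isomorphic to
`Z_{p^{α_{l+1}}}^M` is at least `p^{-M² α_{l+1}} · |G|^M`. -/
theorem stmt7 (p : ℕ) (hp : p.Prime) (l M : ℕ) (hM : 1 ≤ M)
    (α : Fin (l + 1) → ℕ) (hmono : Monotone α)
    (hex : ∃ H : AddSubgroup (∀ i : Fin (l + 1), ZMod (p ^ α i)),
      Nonempty (H ≃+ (Fin M → ZMod (p ^ α (Fin.last l))))) :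
    Nat.card (∀ i : Fin (l + 1), ZMod (p ^ α i)) ^ M ≤
      p ^ (M ^ 2 * α (Fin.last l)) *
        Nat.card {H : AddSubgroup (∀ i : Fin (l + 1), ZMod (p ^ α i)) //
          Nonempty (H ≃+ (Fin M → ZMod (p ^ α (Fin.last l))))} :=
  stmt7_general p hp l M α hmono hex
end

section
/- Let G be a finite abelian group with exponent n and let M > 1 be an integer. If G contains a subgroup isomorphic to Z_n^M, then the number of subgroups of G isomorphic to Z_n^M is at least c_1 · |G| · (number of subgroups of G/C isomorphic to Z_n^{M-1}), where C is any subgroup of G isomorphic to Z_n, and c_1 > 0 is a constant depending only on M and n (one may take c_1 = prod over primes p | n of p^{-M^2 β_p}, where p^{β_p} is the largest power of p dividing n). -/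
/-!
As `n` is the exponent of `G`, `G` is a `ZMod n`-module, and `ZMod n` is self-injective, so the
cyclic subgroup `C ≅ ZMod n` splits off: some `ρ : G →+ ZMod n` restricts to an isomorphism on `C`,
and then `G ⧸ C ≅ D := ker ρ` and `|G| = n |D|`. Fix `c ∈ C` with `ρ c = 1`. Each `d ∈ D` and each
`K ≤ D` with `K ≅ Z_n^(M-1)` give a subgroup `H = ⟨c + d⟩ ⊕ K ≅ Z_n^M` containing `c + d`, and the
pair `(H, c + d)` determines `(d, K)` because `K = H ∩ D`. Hence `|D| · #K ≤ #H · n^M`, and the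
theorem follows from `n^(M+1) ≤ n^(M²)`.
-/

namespace ZMod

theorem exists_eq_mul_of_mul_eq_zero {n : ℕ} {m d : ℤ} (hmd : m * d = n) (hm : m ≠ 0)
    {y : ZMod n} (hy : (m : ZMod n) * y = 0) : ∃ t : ZMod n, y = d * t := by
  obtain ⟨y, rfl⟩ := intCast_surjective y
  rw [← Int.cast_mul, intCast_zmod_eq_zero_iff_dvd, ← hmd] at hy
  obtain ⟨t, rfl⟩ := Int.dvd_of_mul_dvd_mul_left hm hy
  exact ⟨t, by push_cast; rfl⟩

theorem exists_ideal_eq_span_divisor {n : ℕ} (I : Ideal (ZMod n)) :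
    ∃ m d : ℤ, m * d = n ∧ I = Ideal.span {(d : ZMod n)} := by
  obtain ⟨d, hd⟩ := Submodule.IsPrincipal.principal (I.comap (Int.castRingHom (ZMod n)))
  have hn : (n : ℤ) ∈ I.comap (Int.castRingHom (ZMod n)) := by simp
  rw [hd, Submodule.mem_span_singleton] at hn
  obtain ⟨m, hm⟩ := hn
  refine ⟨m, d, hm, ?_⟩
  rw [← Ideal.map_comap_of_surjective (Int.castRingHom (ZMod n)) intCast_surjective I, hd]
  simp [Ideal.map_span]

theorem baer (n : ℕ) [NeZero n] : Module.Baer (ZMod n) (ZMod n) := by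
  intro I f
  obtain ⟨m, d, hmd, rfl⟩ := exists_ideal_eq_span_divisor I
  have hd : (d : ZMod n) ∈ Ideal.span {(d : ZMod n)} := Ideal.mem_span_singleton_self _
  have hm : m ≠ 0 := by rintro rfl; simp [eq_comm, NeZero.ne n] at hmd
  obtain ⟨t, ht⟩ : ∃ t : ZMod n, f ⟨d, hd⟩ = d * t := by
    refine exists_eq_mul_of_mul_eq_zero hmd hm ?_
    rw [← smul_eq_mul, ← map_smul]
    convert map_zero f
    ext
    simp [← Int.cast_mul, hmd]
  refine ⟨LinearMap.mulRight (ZMod n) t, fun x hx => ?_⟩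
  obtain ⟨w, rfl⟩ := Ideal.mem_span_singleton'.mp hx
  have : (⟨w * d, hx⟩ : Ideal.span {(d : ZMod n)}) = w • ⟨d, hd⟩ := rfl
  rw [this, map_smul, ht, LinearMap.mulRight_apply, smul_eq_mul, mul_assoc]

end ZMod

theorem exists_retraction_of_injective {G : Type*} [AddCommGroup G] {n : ℕ} [NeZero n]
    (hn : ∀ g : G, n • g = 0) (i : ZMod n →+ G) (hi : Function.Injective i) :
    ∃ ρ : G →+ ZMod n, ρ.comp i = AddMonoidHom.id (ZMod n) := by
  let := AddCommGroup.zmodModule hn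
  obtain ⟨ρ, hρ⟩ := (ZMod.baer n).extension_property (i.toZModLinearMap n) hi LinearMap.id
  exact ⟨ρ.toAddMonoidHom, AddMonoidHom.ext (LinearMap.congr_fun hρ)⟩

theorem exists_section_apply_one {G : Type*} [AddCommGroup G] {n : ℕ}
    (hn : ∀ g : G, n • g = 0) (ρ : G →+ ZMod n) {g : G} (hg : ρ g = 1) :
    ∃ ψ : ZMod n →+ G, ψ 1 = g ∧ ρ.comp ψ = AddMonoidHom.id (ZMod n) := by
  set ψ := ZMod.lift n ⟨zmultiplesHom G g, by simpa using hn g⟩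
  have hψ : ∀ m : ℤ, ψ m = m • g := fun m => ZMod.lift_coe n _ m
  refine ⟨ψ, by simpa using hψ 1, AddMonoidHom.ext fun a => ?_⟩
  obtain ⟨m, rfl⟩ := ZMod.intCast_surjective a
  simp [hψ, hg]

theorem bijective_mk_comp_subtype_ker {G A : Type*} [AddCommGroup G] [AddGroup A]
    (ρ : G →+ A) (C : AddSubgroup G) (hC : Function.Bijective (ρ.comp C.subtype)) :
    Function.Bijective ((QuotientAddGroup.mk' C).comp ρ.ker.subtype) := by
  refine ⟨(injective_iff_map_eq_zero _).mpr fun d hd => ?_, fun q => ?_⟩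
  · have hdC : (d : G) ∈ C := (QuotientAddGroup.eq_zero_iff _).mp hd
    have : (⟨d, hdC⟩ : C) = 0 := hC.1 (by simpa using AddMonoidHom.mem_ker.mp d.2)
    exact Subtype.ext (by simpa using congrArg Subtype.val this)
  · obtain ⟨g, rfl⟩ := QuotientAddGroup.mk'_surjective C q
    obtain ⟨c, hc⟩ := hC.2 (ρ g)
    refine ⟨⟨g - c, by simpa [sub_eq_zero] using hc.symm⟩, ?_⟩
    simp

namespace AddMonoidHom

variable {G A : Type*} [AddCommGroup G] [AddCommGroup A] {ρ : G →+ A} {ψ : A →+ G}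
  {K : AddSubgroup G}

theorem apply_coprod_subtype (hψ : ρ.comp ψ = .id A) (hK : K ≤ ρ.ker) (x : A × K) :
    ρ (ψ.coprod K.subtype x) = x.1 := by
  simpa [AddMonoidHom.mem_ker.mp (hK x.2.2)] using congr($hψ x.1)

theorem injective_coprod_subtype (hψ : ρ.comp ψ = .id A) (hK : K ≤ ρ.ker) :
    Function.Injective (ψ.coprod K.subtype) := by
  refine (injective_iff_map_eq_zero _).mpr fun x hx => ?_
  have h1 : x.1 = 0 := by rw [← apply_coprod_subtype hψ hK x, hx, map_zero]
  have h2 : (x.2 : G) = 0 := by simpa [h1] using hx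
  exact Prod.ext h1 (Subtype.ext h2)

theorem range_coprod_subtype_inf_ker (hψ : ρ.comp ψ = .id A) (hK : K ≤ ρ.ker) :
    (ψ.coprod K.subtype).range ⊓ ρ.ker = K := by
  refine le_antisymm ?_ fun k hk => ⟨⟨(0, ⟨k, hk⟩), by simp⟩, hK hk⟩
  rintro _ ⟨⟨x, rfl⟩, hx⟩
  have h1 : x.1 = 0 := (apply_coprod_subtype hψ hK x).symm.trans hx
  simp [h1]

theorem nonempty_range_coprod_subtype_addEquiv {W : Type*} [AddGroup W]
    (hψ : ρ.comp ψ = .id A) (hK : K ≤ ρ.ker) (f : K ≃+ W) :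
    Nonempty ((ψ.coprod K.subtype).range ≃+ A × W) :=
  ⟨(ofInjective (injective_coprod_subtype hψ hK)).symm.trans ((AddEquiv.refl A).prodCongr f)⟩

end AddMonoidHom

theorem AddEquiv.card_addSubgroups_iso_congr_left {A B W : Type*} [AddGroup A] [AddGroup B]
    [AddGroup W] (ψ : A ≃+ B) :
    Nat.card {K : AddSubgroup A // Nonempty (K ≃+ W)} =
      Nat.card {K : AddSubgroup B // Nonempty (K ≃+ W)} :=
  Nat.card_congr <| ψ.mapAddSubgroup.toEquiv.subtypeEquiv fun K =>
    ⟨fun ⟨f⟩ => ⟨(ψ.addSubgroupMap K).symm.trans f⟩, fun ⟨f⟩ => ⟨(ψ.addSubgroupMap K).trans f⟩⟩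

theorem AddEquiv.card_addSubgroups_iso_congr_right {A V W : Type*} [AddGroup A] [AddGroup V]
    [AddGroup W] (φ : V ≃+ W) :
    Nat.card {K : AddSubgroup A // Nonempty (K ≃+ V)} =
      Nat.card {K : AddSubgroup A // Nonempty (K ≃+ W)} :=
  Nat.card_congr <| Equiv.subtypeEquivRight fun _ =>
    ⟨fun ⟨f⟩ => ⟨f.trans φ⟩, fun ⟨f⟩ => ⟨f.trans φ.symm⟩⟩

theorem card_sigma_addSubgroups_iso {G V : Type*} [AddGroup G] [Finite G] [AddGroup V] :
    Nat.card (Σ H : {H : AddSubgroup G // Nonempty (H ≃+ V)}, H.1) =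
      Nat.card {H : AddSubgroup G // Nonempty (H ≃+ V)} * Nat.card V := by
  have := Fintype.ofFinite {H : AddSubgroup G // Nonempty (H ≃+ V)}
  rw [Nat.card_sigma, Nat.card_eq_fintype_card, ← smul_eq_mul, ← Finset.card_univ,
    ← Finset.sum_const]
  exact Finset.sum_congr rfl fun H _ => Nat.card_congr H.2.some.toEquiv

theorem card_ker_mul_card_addSubgroups_le {G : Type*} [AddCommGroup G] [Finite G] {n : ℕ}
    (hn : ∀ g : G, n • g = 0) (ρ : G →+ ZMod n) {c : G} (hc : ρ c = 1)
    (W : Type*) [AddCommGroup W] :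
    Nat.card ρ.ker * Nat.card {K : AddSubgroup ρ.ker // Nonempty (K ≃+ W)} ≤
      Nat.card {H : AddSubgroup G // Nonempty (H ≃+ ZMod n × W)} * Nat.card (ZMod n × W) := by
  choose ψ hψ1 hψ using fun d : ρ.ker =>
    exists_section_apply_one hn ρ (g := c + d) (by simp [hc, AddMonoidHom.mem_ker.mp d.2])
  let K' (K : AddSubgroup ρ.ker) : AddSubgroup G := K.map ρ.ker.subtype
  have hK' (K : AddSubgroup ρ.ker) : K' K ≤ ρ.ker := AddSubgroup.map_subtype_le K
  let H (d : ρ.ker) (K : AddSubgroup ρ.ker) : AddSubgroup G := ((ψ d).coprod (K' K).subtype).range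
  have hH (d : ρ.ker) (K : AddSubgroup ρ.ker) (f : K ≃+ W) : Nonempty (H d K ≃+ ZMod n × W) :=
    AddMonoidHom.nonempty_range_coprod_subtype_addEquiv (hψ d) (hK' K) <|
      (K.equivMapOfInjective _ ρ.ker.subtype_injective).symm.trans f
  have hcH : ∀ d K, c + ↑d ∈ H d K := fun d _ => ⟨(1, 0), by simp [hψ1]⟩
  let T := {H : AddSubgroup G // Nonempty (H ≃+ ZMod n × W)}
  let Φ (p : ρ.ker × {K : AddSubgroup ρ.ker // Nonempty (K ≃+ W)}) : Σ t : T, t.1 :=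
    ⟨⟨H p.1 p.2.1, hH p.1 p.2.1 p.2.2.some⟩, ⟨c + p.1, hcH p.1 p.2.1⟩⟩
  have hΦ : Function.Injective Φ := by
    refine .of_comp (f := fun x : Σ t : T, t.1 => ((x.2 : G), x.1.1)) ?_
    rintro ⟨d, K₁⟩ ⟨d₂, K₂⟩ h
    obtain ⟨hd, hH₁₂⟩ := Prod.ext_iff.mp h
    obtain rfl : d = d₂ := Subtype.ext (add_left_cancel hd)
    have : K' K₁.1 = K' K₂.1 := by
      rw [← AddMonoidHom.range_coprod_subtype_inf_ker (hψ d) (hK' K₁.1),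
        ← AddMonoidHom.range_coprod_subtype_inf_ker (hψ d) (hK' K₂.1)]
      exact congrArg (· ⊓ ρ.ker) hH₁₂
    exact Prod.ext rfl (Subtype.ext (AddSubgroup.map_injective ρ.ker.subtype_injective this))
  calc Nat.card ρ.ker * Nat.card {K : AddSubgroup ρ.ker // Nonempty (K ≃+ W)}
      = Nat.card (ρ.ker × {K : AddSubgroup ρ.ker // Nonempty (K ≃+ W)}) :=
        (Nat.card_prod _ _).symm
    _ ≤ Nat.card (Σ t : T, t.1) := Nat.card_le_card_of_injective Φ hΦ
    _ = Nat.card T * Nat.card (ZMod n × W) := card_sigma_addSubgroups_iso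

theorem Nat.prod_primeFactors_pow_mul_factorization {n : ℕ} (hn : n ≠ 0) (k : ℕ) :
    ∏ p ∈ n.primeFactors, p ^ (k * n.factorization p) = n ^ k := by
  simp_rw [pow_mul', Finset.prod_pow, ← Nat.prod_primeFactors_pow_factorization hn]

theorem stmt9_general (G : Type) [AddCommGroup G] [Finite G] (n M : ℕ) (hM : 1 < M)
    (hexp : AddMonoid.exponent G = n)
    (C : AddSubgroup G) (hC : Nonempty (C ≃+ ZMod n)) :
    Nat.card G *
        Nat.card {K : AddSubgroup (G ⧸ C) //
          Nonempty (K ≃+ (Fin (M - 1) → ZMod n))} ≤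
      (∏ p ∈ n.primeFactors, p ^ (M ^ 2 * n.factorization p)) *
        Nat.card {H : AddSubgroup G // Nonempty (H ≃+ (Fin M → ZMod n))} := by
  obtain ⟨e⟩ := hC
  have hn0 : n ≠ 0 := hexp ▸ AddMonoid.exponent_ne_zero_of_finite
  have : NeZero n := ⟨hn0⟩
  have hn (g : G) : n • g = 0 := hexp ▸ AddMonoid.exponent_nsmul_eq_zero g
  obtain ⟨ρ, hρ⟩ := exists_retraction_of_injective hn (C.subtype.comp e.symm.toAddMonoidHom)
    (C.subtype_injective.comp e.symm.injective)
  have hρC : ρ.comp C.subtype = e.toAddMonoidHom := by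
    ext c; simpa using congr($hρ (e c))
  have hquot := AddEquiv.ofBijective _ <|
    bijective_mk_comp_subtype_ker ρ C (hρC ▸ e.bijective)
  obtain ⟨M, rfl⟩ : ∃ M', M = M' + 1 := ⟨M - 1, by omega⟩
  have hcount := card_ker_mul_card_addSubgroups_le hn ρ (c := e.symm 1)
    (by simpa using congr($hρ 1)) (Fin M → ZMod n)
  rw [Nat.card_prod, Nat.card_fun, Nat.card_fin, Nat.card_zmod] at hcount
  rw [AddSubgroup.card_eq_card_quotient_mul_card_addSubgroup C, Nat.card_congr e.toEquiv,
    Nat.card_zmod, ← hquot.card_addSubgroups_iso_congr_left, Nat.card_congr hquot.toEquiv.symm,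
    Nat.add_sub_cancel, Nat.prod_primeFactors_pow_mul_factorization hn0,
    ← (Fin.consLinearEquiv ℤ fun _ => ZMod n).toAddEquiv.card_addSubgroups_iso_congr_right]
  set NK := Nat.card {K : AddSubgroup ρ.ker // Nonempty (K ≃+ (Fin M → ZMod n))}
  set NH := Nat.card {H : AddSubgroup G // Nonempty (H ≃+ ZMod n × (Fin M → ZMod n))}
  calc Nat.card ρ.ker * n * NK = n * (Nat.card ρ.ker * NK) := by ring
    _ ≤ n * (NH * (n * n ^ M)) := Nat.mul_le_mul_left n hcount
    _ = n ^ (M + 2) * NH := by ring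
    _ ≤ n ^ ((M + 1) ^ 2) * NH := by
      gcongr
      exacts [Nat.one_le_iff_ne_zero.mpr hn0, by nlinarith]

/-- let `G` be a finite abelian group with exponent `n`, `M > 1`, and suppose
`G` contains a subgroup isomorphic to `Z_n^M`. Then for any subgroup `C ≅ Z_n`, the number
of subgroups of `G` isomorphic to `Z_n^M` is at least
`c_1 · |G| · #{subgroups of G/C isomorphic to Z_n^{M-1}}` with
`c_1⁻¹ = ∏_{p | n} p^{M² β_p}` (where `p^{β_p}` is the largest power of `p` dividing `n`),
a constant depending only on `M` and `n`. -/
theorem stmt9 (G : Type) [AddCommGroup G] [Finite G] (n M : ℕ) (hM : 1 < M)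
    (hexp : AddMonoid.exponent G = n)
    (hex : ∃ H : AddSubgroup G, Nonempty (H ≃+ (Fin M → ZMod n)))
    (C : AddSubgroup G) (hC : Nonempty (C ≃+ ZMod n)) :
    Nat.card G *
        Nat.card {K : AddSubgroup (G ⧸ C) //
          Nonempty (K ≃+ (Fin (M - 1) → ZMod n))} ≤
      (∏ p ∈ n.primeFactors, p ^ (M ^ 2 * n.factorization p)) *
        Nat.card {H : AddSubgroup G // Nonempty (H ≃+ (Fin M → ZMod n))} :=
  stmt9_general G n M hM hexp C hC
end

section
/- Let n be a positive integer, let G = Z_n^M, and let A be a k × m integer matrix satisfying the columns condition over Z_n. If x_1, ..., x_m ∈ G generate a subgroup isomorphic to Z_n^m (i.e., are independent of order n), then there exist y_1, ..., y_m ∈ F(x_1, ..., x_m) with A·(y_1, ..., y_m)^T = 0 in G^k, and each y_i has order n. -/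
open Finset

/-- An integer `k × m` matrix satisfies the columns condition over `Z_n` if, after reordering
the columns, there are indices `0 = ks 0 < ks 1 < ... < ks t = m` such that the first block of
columns sums to `0 (mod n)` and each later block-sum is a `Z_n`-linear combination of the
preceding columns, all computations taken in `Z_n`. -/
def ZModColumnsCondition (n : ℕ) {k m : ℕ} (A : Matrix (Fin k) (Fin m) ℤ) : Prop :=
  ∃ (σ : Equiv.Perm (Fin m)) (t : ℕ) (ks : Fin (t + 1) → ℕ),
    0 < t ∧ ks 0 = 0 ∧ ks (Fin.last t) = m ∧ StrictMono ks ∧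
    (∀ r : Fin k, ∑ j ∈ univ.filter (fun j : Fin m => (j : ℕ) < ks 1),
      ((A r (σ j) : ZMod n)) = 0) ∧
    (∀ i : Fin t, (i : ℕ) ≠ 0 → ∃ c : Fin m → ZMod n, ∀ r : Fin k,
      ∑ j ∈ univ.filter
        (fun j : Fin m => ks i.castSucc ≤ (j : ℕ) ∧ (j : ℕ) < ks i.succ),
          ((A r (σ j) : ZMod n)) =
      ∑ j ∈ univ.filter (fun j : Fin m => (j : ℕ) < ks i.castSucc),
          c j * (A r (σ j) : ZMod n))

/-! Label each block of columns by its first column `b`, let `z_b` be the corresponding `x`, and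
let `c_b` express the `b`-th block sum through the earlier columns (`c = 0` for the first block).
Giving every column `j` of block `b` the value `y_j = z_b - ∑_{b' > b} c_{b'}(j) z_{b'}` makes
`∑_j A_j y_j = ∑_b S^b z_b - ∑_{b'} (∑_{j before b'} c_{b'}(j) A_j) z_{b'} = 0`. Each `y_j` lies in
`F(x)`, and has order `n` because its coefficient at `z_b` is `1` and the `x`'s are independent. -/

theorem addOrderOf_eq_of_smul_eq_zero {n : ℕ} {V : Type*} [AddCommGroup V] [Module (ZMod n) V]
    {v : V} (hv : ∀ a : ZMod n, a • v = 0 → a = 0) : addOrderOf v = n := by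
  apply Nat.dvd_antisymm
  · apply addOrderOf_dvd_of_nsmul_eq_zero
    rw [← Nat.cast_smul_eq_nsmul (ZMod n), ZMod.natCast_self, zero_smul]
  · rw [← ZMod.natCast_eq_zero_iff]
    apply hv
    rw [Nat.cast_smul_eq_nsmul, addOrderOf_nsmul_eq_zero]

theorem LinearIndependent.eq_zero_of_smul_add_sum_eq_zero {ι R V : Type*} [Semiring R]
    [AddCommMonoid V] [Module R V] [DecidableEq ι] {x : ι → V} (hx : LinearIndependent R x)
    {i : ι} {s : Finset ι} (hi : i ∉ s) {b : ι → R} {a : R}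
    (h : a • (x i + ∑ j ∈ s, b j • x j) = 0) : a = 0 := by
  have key := linearIndependent_iff'ₛ.mp hx (insert i s) (Function.update (fun j => a * b j) i a)
    0 ?_ i (mem_insert_self i s)
  · simpa using key
  rw [sum_insert hi, Function.update_self]
  simp only [Pi.zero_apply, zero_smul, sum_const_zero]
  rw [← h, smul_add, smul_sum]
  congr 1
  refine sum_congr rfl fun j hj => ?_
  rw [Function.update_of_ne (ne_of_mem_of_not_mem hj hi), mul_smul]

section BlockSolution

variable {ι β R V : Type*} [Fintype β] [LinearOrder β] [CommRing R]
  [AddCommGroup V] [Module R V]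

def blockSolution (block : ι → β) (c : β → ι → R) (z : β → V) (j : ι) : V :=
  z (block j) - ∑ b with block j < b, c b j • z b

theorem blockSolution_eq (block : ι → β) (c : β → ι → R) (z : β → V) (j : ι) :
    blockSolution block c z j = z (block j) + ∑ b with block j < b, (-c b j) • z b := by
  simp only [blockSolution, sub_eq_add_neg, ← sum_neg_distrib, neg_smul]

theorem sum_smul_blockSolution_eq_zero [Fintype ι] (block : ι → β) (c : β → ι → R) (z : β → V)
    (a : ι → R)
    (ha : ∀ b, ∑ j with block j = b, a j = ∑ j with block j < b, c b j * a j) :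
    ∑ j, a j • blockSolution block c z j = 0 := by
  have hlead : ∑ j, a j • z (block j) = ∑ b, (∑ j with block j = b, a j) • z b := by
    rw [← sum_fiberwise univ block (fun j => a j • z (block j))]
    refine sum_congr rfl fun b _ => ?_
    rw [sum_smul]
    exact sum_congr rfl fun j hj => by rw [(mem_filter.mp hj).2]
  have htail : ∑ j, a j • ∑ b with block j < b, c b j • z b
      = ∑ b, (∑ j with block j < b, c b j * a j) • z b := by
    simp only [smul_sum, sum_smul, sum_filter, smul_ite, smul_zero, ite_smul, zero_smul, smul_smul]
    rw [sum_comm]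
    simp only [mul_comm]
  simp only [blockSolution, smul_sub, sum_sub_distrib, hlead, htail, ha, sub_self]

end BlockSolution

section Breakpoints

variable {t : ℕ} {ks : Fin (t + 1) → ℕ} {j : ℕ}

theorem exists_castSucc_le_lt_succ (h0 : ks 0 ≤ j) (hlast : j < ks (Fin.last t)) :
    ∃ i : Fin t, ks i.castSucc ≤ j ∧ j < ks i.succ := by
  suffices ∀ i : Fin (t + 1), ks i ≤ j → ∃ i' : Fin t, ks i'.castSucc ≤ j ∧ j < ks i'.succ from
    this 0 h0
  intro i
  induction i using Fin.reverseInduction with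
  | last => intro h; omega
  | cast i ih =>
    intro h
    by_cases hj : j < ks i.succ
    · exact ⟨i, h, hj⟩
    · exact ih (not_lt.mp hj)

theorem Monotone.le_of_castSucc_le_of_lt_succ (hks : Monotone ks) {b i : Fin t}
    (hb : ks b.castSucc ≤ j) (hi : j < ks i.succ) : b ≤ i := by
  by_contra! h
  have := hks (Fin.succ_le_castSucc_iff.mpr h)
  omega

theorem Monotone.lt_iff_lt_castSucc (hks : Monotone ks) {b i : Fin t}
    (hb : ks b.castSucc ≤ j ∧ j < ks b.succ) : b < i ↔ j < ks i.castSucc := by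
  refine ⟨fun h => hb.2.trans_le (hks (Fin.succ_le_castSucc_iff.mpr h)), fun h => ?_⟩
  by_contra! hib
  have := hks (Fin.castSucc_le_castSucc_iff.mpr hib)
  omega

theorem Monotone.eq_iff_castSucc_le_lt_succ (hks : Monotone ks) {b i : Fin t}
    (hb : ks b.castSucc ≤ j ∧ j < ks b.succ) : b = i ↔ ks i.castSucc ≤ j ∧ j < ks i.succ :=
  ⟨fun h => h ▸ hb, fun hi => le_antisymm (hks.le_of_castSucc_le_of_lt_succ hb.1 hi.2)
    (hks.le_of_castSucc_le_of_lt_succ hi.1 hb.2)⟩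

end Breakpoints

theorem Equiv.sum_filter_comp_symm {ι κ M : Type*} [Fintype ι] [Fintype κ] [AddCommMonoid M]
    (σ : ι ≃ κ) (p : ι → Prop) [DecidablePred p] (f : κ → M) :
    ∑ j with p (σ.symm j), f j = ∑ i with p i, f (σ i) := by
  simp only [sum_filter]
  rw [← σ.sum_comp]
  simp only [Equiv.symm_apply_apply]

theorem ZModColumnsCondition.exists_blocks {n k m : ℕ} {A : Matrix (Fin k) (Fin m) ℤ}
    (hA : ZModColumnsCondition n A) :
    ∃ (block : Fin m → Fin m) (c : Fin m → Fin m → ZMod n), ∀ r b,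
      ∑ j with block j = b, (A r j : ZMod n) = ∑ j with block j < b, c b j * (A r j : ZMod n) := by
  obtain ⟨σ, t, ks, ht, hks0, hkslast, hks, hfirst, hlater⟩ := hA
  choose blk hblk using fun j : Fin m =>
    exists_castSucc_le_lt_succ (ks := ks) (j := j) (by omega) (by omega)
  have hblock : ∀ i : Fin t, ∃ c : Fin m → ZMod n, ∀ r,
      ∑ j with blk j = i, (A r (σ j) : ZMod n) =
        ∑ j with blk j < i, c j * (A r (σ j) : ZMod n) := by
    intro i
    simp only [fun j => hks.monotone.eq_iff_castSucc_le_lt_succ (i := i) (hblk j),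
      fun j => hks.monotone.lt_iff_lt_castSucc (i := i) (hblk j)]
    by_cases hi : (i : ℕ) = 0
    · refine ⟨0, fun r => ?_⟩
      have hsucc : i.succ = 1 := Fin.ext (by simp [hi, Nat.mod_eq_of_lt (by omega : 1 < t + 1)])
      have hcast : i.castSucc = 0 := Fin.ext hi
      simpa [hsucc, hcast, hks0] using hfirst r
    · exact hlater i hi
  choose c hc using hblock
  let e : Fin t → Fin m := fun i =>
    ⟨ks i.castSucc, (hks (Fin.castSucc_lt_succ (i := i))).trans_le
      (hkslast ▸ hks.monotone (Fin.le_last _))⟩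
  have he : StrictMono e := fun i i' h => hks (Fin.castSucc_lt_castSucc_iff.mpr h)
  refine ⟨fun j => e (blk (σ.symm j)), fun b j => Function.extend e c 0 b (σ.symm j),
    fun r b => ?_⟩
  rw [σ.sum_filter_comp_symm (fun j => e (blk j) = b),
    σ.sum_filter_comp_symm (fun j => e (blk j) < b)]
  simp only [Equiv.symm_apply_apply]
  by_cases hb : ∃ i, e i = b
  · obtain ⟨i, rfl⟩ := hb
    simp only [he.injective.eq_iff, he.lt_iff_lt, he.injective.extend_apply]
    exact hc i r
  · push Not at hb
    simp [Function.extend_apply', hb]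

theorem stmt14_general (n M k m : ℕ)
    (A : Matrix (Fin k) (Fin m) ℤ) (hA : ZModColumnsCondition n A)
    (x : Fin m → (Fin M → ZMod n))
    (hx : Function.Injective (fun c : Fin m → ZMod n => ∑ i, c i • x i)) :
    ∃ y : Fin m → (Fin M → ZMod n),
      (∀ jdx : Fin m, ∃ i : Fin m, ∃ a : Fin m → ZMod n,
        y jdx = x i + ∑ j ∈ univ.filter (fun j : Fin m => i < j), a j • x j) ∧
      (∀ r : Fin k, ∑ j : Fin m, A r j • y j = 0) ∧
      (∀ j : Fin m, addOrderOf (y j) = n) := by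
  obtain ⟨block, c, hblock⟩ := hA.exists_blocks
  have hli : LinearIndependent (ZMod n) x :=
    Fintype.linearIndependent_iff.mpr fun g hg => congrFun (hx (by simpa using hg))
  refine ⟨blockSolution block c x, fun j => ⟨block j, _, blockSolution_eq block c x j⟩,
    fun r => ?_, fun j => addOrderOf_eq_of_smul_eq_zero fun a ha => ?_⟩
  · simp only [← Int.cast_smul_eq_zsmul (ZMod n)]
    exact sum_smul_blockSolution_eq_zero block c x _ (hblock r)
  · rw [blockSolution_eq] at ha
    exact hli.eq_zero_of_smul_add_sum_eq_zero (by simp) ha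

/-- let `G = Z_n^M` and let `A` be a `k × m` integer matrix satisfying the
columns condition over `Z_n`. If `x_1, ..., x_m ∈ G` generate a subgroup isomorphic to
`Z_n^m` (they are independent of order `n`), then there are
`y_1, ..., y_m ∈ F(x_1, ..., x_m) = {x_i + ∑_{j>i} a_j x_j}` with `A·y = 0` in `G^k`, and
each `y_i` has order `n`. -/
theorem stmt14 (n M k m : ℕ) (hn : 0 < n)
    (A : Matrix (Fin k) (Fin m) ℤ) (hA : ZModColumnsCondition n A)
    (x : Fin m → (Fin M → ZMod n))
    (hx : Function.Injective (fun c : Fin m → ZMod n => ∑ i, c i • x i)) :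
    ∃ y : Fin m → (Fin M → ZMod n),
      (∀ jdx : Fin m, ∃ i : Fin m, ∃ a : Fin m → ZMod n,
        y jdx = x i + ∑ j ∈ univ.filter (fun j : Fin m => i < j), a j • x j) ∧
      (∀ r : Fin k, ∑ j : Fin m, A r j • y j = 0) ∧
      (∀ j : Fin m, addOrderOf (y j) = n) :=
  stmt14_general n M k m A hA x hx
end

section
/- The 3 × 4 integer matrix A with rows (1, 0, −1, 0), (0, 1, −1, 0), (0, 0, 0, 2) satisfies the columns condition over Z_2 (the sum of all four columns is zero mod 2), but for every N ≥ 1, the system Ax = 0 over the group Z_4^N has no solution x = (x_1, x_2, x_3, x_4) in which x_4 has order 4 (i.e., every solution satisfies x_4 ∈ 2·Z_4^N). -/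
set_option linter.unnecessarySeqFocus false


/-- the `3 × 4` integer matrix with rows `(1,0,−1,0)`, `(0,1,−1,0)`,
`(0,0,0,2)` has all its columns summing to zero mod 2 (so it satisfies the columns condition
over `Z_2` with a single block), yet for every `N ≥ 1` the system `Ax = 0` over `Z_4^N` has
no solution in which `x_4` has order 4: every solution satisfies `x_4 ∈ 2·Z_4^N`. -/
theorem stmt15 :
    (∀ r : Fin 3, ∑ j : Fin 4,
      (((!![1, 0, -1, 0; 0, 1, -1, 0; 0, 0, 0, 2] : Matrix (Fin 3) (Fin 4) ℤ) r j :
        ZMod 2)) = 0) ∧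
    (∀ N : ℕ, 1 ≤ N → ∀ x : Fin 4 → (Fin N → ZMod 4),
      (∀ r : Fin 3, ∑ j : Fin 4,
        (!![1, 0, -1, 0; 0, 1, -1, 0; 0, 0, 0, 2] : Matrix (Fin 3) (Fin 4) ℤ) r j • x j
          = 0) →
      addOrderOf (x 3) ≠ 4 ∧ ∃ y : Fin N → ZMod 4, x 3 = 2 • y) := by
  constructor
  · intro r
    fin_cases r <;> simp [Fin.sum_univ_four] <;> decide
  · intro N hN x hx
    have h2 := hx 2
    simp [Fin.sum_univ_four] at h2
    -- h2 : (2 : ℤ) • x 3 = 0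
    have hpt : ∀ i, 2 * x 3 i = 0 := by
      intro i
      have := congrFun h2 i
      simpa using this
    have hsm : (2 : ℕ) • x 3 = 0 := funext fun i => by
      have := hpt i
      simpa [two_smul, two_mul] using this
    have hkey : ∀ i, ∃ b : ZMod 4, x 3 i = 2 * b := by
      intro i
      have hi : (2 : ℕ) • x 3 i = 0 := congrFun hsm i
      revert hi
      generalize x 3 i = a
      revert a
      decide
    refine ⟨?_, ?_⟩
    · intro h4
      have := addOrderOf_dvd_of_nsmul_eq_zero hsm
      rw [h4] at this
      omega
    · choose y hy using hkey
      exact ⟨y, funext fun i => by simpa [two_mul, two_smul] using hy i⟩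
end

section
/- Let G be a finite abelian group with exponent n, let n' | n, and let G' be the largest subgroup of G with exponent n' (the set of elements g with n'·g = 0). Suppose that for every divisor d of n that does not divide n', G contains at most M independent elements of order d (i.e., G contains no subgroup isomorphic to Z_d^{M+1}). Then |G'| ≥ c_2 |G| with c_2^{-1} = prod_{d | n} d^M. -/
/-!
Write `G ≃ ∏ᵢ ℤ/kᵢ`. Multiplication by `n'` has kernel `G'`, so `|G| = |G'| · |n'G|`. The image
`n'G` only sees the factors with `kᵢ ∤ n'`, hence `|n'G| ≤ ∏_{kᵢ ∤ n'} kᵢ`. Each such `kᵢ` is a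
divisor `d` of `n` with `d ∤ n'`, and no `d` occurs more than `M` times, since `M + 1` factors
`ℤ/d` would span a copy of `Z_d^{M+1}`.
-/

open Finset

theorem Finset.prod_le_prod_pow_of_card_fiber_le {ι : Type*} {s : Finset ι} {t : Finset ℕ}
    {f : ι → ℕ} {M : ℕ} (hf : ∀ i ∈ s, f i ∈ t) (ht : ∀ d ∈ t, 0 < d)
    (hcard : ∀ d ∈ t, #{i ∈ s | f i = d} ≤ M) : ∏ i ∈ s, f i ≤ ∏ d ∈ t, d ^ M := by
  rw [← prod_fiberwise_of_maps_to hf]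
  refine prod_le_prod' fun d hd => ?_
  rw [prod_eq_pow_card fun i hi => (mem_filter.mp hi).2]
  exact Nat.pow_le_pow_right (ht d hd) (hcard d hd)

theorem Submodule.card_eq_card_torsionBy_mul_card_range_smul {R M : Type*} [CommRing R]
    [AddCommGroup M] [Module R M] (a : R) :
    Nat.card M =
      Nat.card (torsionBy R M a).toAddSubgroup * Nat.card (Set.range (a • · : M → M)) := by
  rw [← (torsionBy R M a).toAddSubgroup.card_mul_index]
  exact congrArg _ (AddSubgroup.index_ker (DistribSMul.toLinearMap R M a).toAddMonoidHom)

section PiZMod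

variable {G ι : Type*} [AddCommGroup G] [Fintype ι] {k : ι → ℕ}

theorem card_range_nsmul_le_of_addEquiv_pi_zmod [∀ i, NeZero (k i)]
    (e : G ≃+ ∀ i, ZMod (k i)) (m : ℕ) :
    Nat.card (Set.range (m • · : G → G)) ≤ ∏ i with ¬ k i ∣ m, k i := by
  classical
  let g : (∀ i : {i // ¬ k i ∣ m}, ZMod (k i)) → G :=
    fun y => e.symm fun i => if h : k i ∣ m then 0 else m • y ⟨i, h⟩
  have hg : Set.range (m • · : G → G) ⊆ Set.range g := by
    rintro _ ⟨x, rfl⟩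
    refine ⟨fun i => e x i, e.injective ?_⟩
    funext i
    simp only [g, AddEquiv.apply_symm_apply, map_nsmul, Pi.smul_apply]
    split_ifs with h
    · rw [nsmul_eq_mul, (ZMod.natCast_eq_zero_iff m (k i)).mpr h, zero_mul]
    · rfl
  calc Nat.card (Set.range (m • · : G → G)) ≤ Nat.card (Set.range g) :=
        Nat.card_mono (Set.finite_range g) hg
    _ ≤ Nat.card (∀ i : {i // ¬ k i ∣ m}, ZMod (k i)) := Finite.card_range_le g
    _ = ∏ i with ¬ k i ∣ m, k i := by
        simp only [Nat.card_pi, Nat.card_zmod]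
        exact (prod_subtype _ (fun i => mem_filter_univ i) k).symm

theorem exists_addSubgroup_addEquiv_pi_zmod (e : G ≃+ ∀ i, ZMod (k i)) {d m : ℕ}
    (h : m ≤ #{i | k i = d}) : ∃ H : AddSubgroup G, Nonempty (H ≃+ (Fin m → ZMod d)) := by
  classical
  obtain ⟨s, hsd, hsm⟩ := exists_subset_card_eq h
  have hk : ∀ i : s, d = k i := fun i => (mem_filter.mp (hsd i.2)).2.symm
  -- `Fin m → ZMod d ≃ ∏_{i ∈ s} ZMod (k i)`, extended by zero outside `s`
  let φ : (Fin m → ZMod d) →+ G :=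
    ((RingEquiv.piEquivPiSubtypeProd (· ∈ s) _).symm.toAddEquiv.trans e.symm).toAddMonoidHom.comp <|
      (AddMonoidHom.inl _ _).comp <|
        ((AddEquiv.arrowCongr (s.equivFinOfCardEq hsm).symm (AddEquiv.refl _)).trans
          (AddEquiv.piCongrRight fun i => (ZMod.ringEquivCongr (hk i)).toAddEquiv)).toAddMonoidHom
  have hφ : Function.Injective φ := by
    simp only [φ, AddMonoidHom.coe_comp, AddEquiv.coe_toAddMonoidHom]
    exact (AddEquiv.injective _).comp ((Prod.mk_left_injective 0).comp (AddEquiv.injective _))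
  exact ⟨φ.range, ⟨(AddMonoidHom.ofInjective hφ).symm⟩⟩

end PiZMod

theorem stmt17_general (G : Type) [AddCommGroup G] [Finite G] (n n' M : ℕ)
    (hexp : AddMonoid.exponent G = n)
    (hM : ∀ d : ℕ, d ∣ n → ¬ d ∣ n' →
      ¬ ∃ H : AddSubgroup G, Nonempty (H ≃+ (Fin (M + 1) → ZMod d))) :
    Nat.card G ≤ (∏ d ∈ n.divisors, d ^ M) *
      Nat.card ((Submodule.torsionBy ℤ G (n' : ℤ)).toAddSubgroup) := by
  obtain ⟨ι, _, k, hk, ⟨e⟩⟩ := AddCommGroup.equiv_directSum_zmod_of_finite' G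
  replace e := e.trans (DirectSum.addEquivProd _)
  have : ∀ i, NeZero (k i) := fun i => ⟨(zero_lt_one.trans (hk i)).ne'⟩
  have hn : n ≠ 0 := hexp ▸ AddMonoid.exponent_ne_zero_of_finite
  have hkn : ∀ i, k i ∣ n := fun i => by
    rw [← hexp, AddMonoid.exponent_eq_of_addEquiv e, AddMonoid.exponent_pi]
    simpa using dvd_lcm (mem_univ i)
  have hfiber : ∀ d ∈ n.divisors, #{i ∈ {i | ¬ k i ∣ n'} | k i = d} ≤ M := by
    intro d _
    by_contra! hlt
    obtain ⟨i, hi⟩ := card_pos.mp (M.zero_le.trans_lt hlt)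
    obtain ⟨hin', rfl⟩ := by simpa using hi
    refine hM (k i) (hkn i) hin' (exists_addSubgroup_addEquiv_pi_zmod e ?_)
    exact hlt.trans_le (card_le_card (filter_subset_filter _ (subset_univ _)))
  rw [Submodule.card_eq_card_torsionBy_mul_card_range_smul (n' : ℤ), mul_comm]
  gcongr
  simp only [natCast_zsmul]
  exact (card_range_nsmul_le_of_addEquiv_pi_zmod e n').trans <|
    prod_le_prod_pow_of_card_fiber_le (fun i _ => Nat.mem_divisors.mpr ⟨hkn i, hn⟩)
      (fun _ hd => Nat.pos_of_mem_divisors hd) hfiber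

/-- let `G` be a finite abelian group with exponent `n`, `n' | n`, and let
`G' = {g ∈ G : n'·g = 0}` be the largest subgroup of `G` of exponent `n'`. If for every
divisor `d` of `n` not dividing `n'` the group `G` contains no subgroup isomorphic to
`Z_d^{M+1}`, then `|G'| ≥ c_2|G|` with `c_2⁻¹ = ∏_{d | n} d^M`. -/
theorem stmt17 (G : Type) [AddCommGroup G] [Finite G] (n n' M : ℕ)
    (hexp : AddMonoid.exponent G = n) (hdvd : n' ∣ n)
    (hM : ∀ d : ℕ, d ∣ n → ¬ d ∣ n' →
      ¬ ∃ H : AddSubgroup G, Nonempty (H ≃+ (Fin (M + 1) → ZMod d))) :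
    Nat.card G ≤ (∏ d ∈ n.divisors, d ^ M) *
      Nat.card ((Submodule.torsionBy ℤ G (n' : ℤ)).toAddSubgroup) :=
  stmt17_general G n n' M hexp hM
end
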